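/- Let N be a positive integer and a an integer with 0 ≤ a ≤ (N−1)/2. If f : ℤ/Nℤ → ℂ vanishes outside the discrete interval [−a,a], then J f vanishes outside [−a,a]; and if f vanishes on [−a,a], then J f vanishes on [−a,a]. Thus J preserves both L²([−a,a]) and L²([−a,a]'). -/
import Mathlib

open Complex

/-- The discrete interval `[-a, a]`, viewed as a subset of `ZMod N`. -/
def dInterval (N : ℕ) (a : ℤ) : Set (ZMod N) := {x | ∃ j : ℤ, |j| ≤ a ∧ (j : ZMod N) = x}

/-- `A(x) = cos(π(2x+1)/N) − cos(π(2a+1)/N)`. -/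
noncomputable def acoef (N : ℕ) (a : ℤ) (x : ZMod N) : ℝ :=
  Real.cos (Real.pi * (2 * (x.val : ℝ) + 1) / N) - Real.cos (Real.pi * (2 * (a : ℝ) + 1) / N)

/-- `B(x) = −2 cos(π(2a+1)/N) cos(2πx/N)`. -/
noncomputable def bcoef (N : ℕ) (a : ℤ) (x : ZMod N) : ℝ :=
  -2 * Real.cos (Real.pi * (2 * (a : ℝ) + 1) / N) * Real.cos (2 * Real.pi * (x.val : ℝ) / N)

/-- The operator `J = J₁ − cos(π(2a+1)/N) J₀`:
`(J f)(x) = A(x) f(x+1) + B(x) f(x) + A(x−1) f(x−1)`. -/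
noncomputable def Jop (N : ℕ) (a : ℤ) (f : ZMod N → ℂ) : ZMod N → ℂ := fun x =>
  (acoef N a x : ℂ) * f (x + 1) + (bcoef N a x : ℂ) * f x + (acoef N a (x - 1) : ℂ) * f (x - 1)

lemma acoef_a (N : ℕ) (_hN : 0 < N) (a : ℤ) (h0 : 0 ≤ a) (h1 : 2 * a + 1 ≤ (N : ℤ)) :
    acoef N a ((a : ℤ) : ZMod N) = 0 := by
  have hlt : a.toNat < N := by omega
  have hv : (((a : ℤ) : ZMod N)).val = a.toNat := by
    conv_lhs => rw [← Int.toNat_of_nonneg h0]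
    rw [Int.cast_natCast, ZMod.val_cast_of_lt hlt]
  have hR : ((a.toNat : ℕ) : ℝ) = (a : ℝ) := by
    exact_mod_cast congrArg (Int.cast : ℤ → ℝ) (Int.toNat_of_nonneg h0)
  unfold acoef
  rw [hv, hR, sub_self]

lemma acoef_b (N : ℕ) (_hN : 0 < N) (a : ℤ) (h0 : 0 ≤ a) (h1 : 2 * a + 1 ≤ (N : ℤ)) :
    acoef N a ((-a - 1 : ℤ) : ZMod N) = 0 := by
  set m : ℕ := N - a.toNat - 1 with hm
  have hmlt : m < N := by omega
  have hmZ : (m : ℤ) = (N : ℤ) - a - 1 := by omega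
  have hcast : ((-a - 1 : ℤ) : ZMod N) = ((m : ℤ) : ZMod N) := by
    rw [ZMod.intCast_eq_intCast_iff]
    exact (Int.modEq_iff_dvd.mpr ⟨1, by omega⟩)
  have hv : (((-a - 1 : ℤ) : ZMod N)).val = m := by
    rw [hcast, Int.cast_natCast, ZMod.val_cast_of_lt hmlt]
  have hR : ((m : ℕ) : ℝ) = (N : ℝ) - (a : ℝ) - 1 := by exact_mod_cast hmZ
  have hN0 : (N : ℝ) ≠ 0 := by positivity
  unfold acoef
  rw [hv, hR]
  rw [show Real.pi * (2 * ((N : ℝ) - (a : ℝ) - 1) + 1) / N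
      = 2 * Real.pi - Real.pi * (2 * (a : ℝ) + 1) / N by field_simp; ring]
  rw [show 2 * Real.pi - Real.pi * (2 * (a : ℝ) + 1) / N
      = -(Real.pi * (2 * (a : ℝ) + 1) / N - 2 * Real.pi) by ring,
    Real.cos_neg, Real.cos_sub_two_pi, sub_self]

theorem statement3 (N : ℕ) (hN : 0 < N) (a : ℤ) (h0 : 0 ≤ a) (h1 : 2 * a + 1 ≤ (N : ℤ))
    (f : ZMod N → ℂ) :
    ((∀ x ∉ dInterval N a, f x = 0) → ∀ x ∉ dInterval N a, Jop N a f x = 0) ∧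
    ((∀ x ∈ dInterval N a, f x = 0) → ∀ x ∈ dInterval N a, Jop N a f x = 0) := by
  have hAa := acoef_a N hN a h0 h1
  have hAb := acoef_b N hN a h0 h1
  constructor
  · intro hf x hx
    have h2 : f x = 0 := hf x hx
    have h1' : (acoef N a x : ℂ) * f (x + 1) = 0 := by
      by_cases hm : x + 1 ∈ dInterval N a
      · -- x + 1 ∈ interval, x ∉ : so x = -a-1 and A(x) = 0
        obtain ⟨j, hj, hjx⟩ := hm
        have hx' : x = ((j - 1 : ℤ) : ZMod N) := by push_cast; rw [hjx]; ring
        rcases eq_or_lt_of_le (neg_le_of_abs_le hj) with hja | hja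
        · have : x = ((-a - 1 : ℤ) : ZMod N) := by rw [hx', ← hja]
          rw [this, hAb]; simp
        · exact absurd ⟨j - 1, by rw [abs_le] at hj ⊢; omega, hx'.symm⟩ hx
      · rw [hf _ hm, mul_zero]
    have h3' : (acoef N a (x - 1) : ℂ) * f (x - 1) = 0 := by
      by_cases hm : x - 1 ∈ dInterval N a
      · obtain ⟨j, hj, hjx⟩ := hm
        have hx' : x = ((j + 1 : ℤ) : ZMod N) := by push_cast; rw [hjx]; ring
        rcases eq_or_lt_of_le (le_of_abs_le hj) with hja | hja
        · have : x - 1 = ((a : ℤ) : ZMod N) := by rw [← hjx, hja]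
          rw [this, hAa]; simp
        · exact absurd ⟨j + 1, by rw [abs_le] at hj ⊢; omega, hx'.symm⟩ hx
      · rw [hf _ hm, mul_zero]
    simp [Jop, h1', h2, h3']
  · intro hf x hx
    have h2 : f x = 0 := hf x hx
    obtain ⟨j, hj, hjx⟩ := hx
    have h1' : (acoef N a x : ℂ) * f (x + 1) = 0 := by
      by_cases hm : x + 1 ∈ dInterval N a
      · rw [hf _ hm, mul_zero]
      · -- x ∈ interval, x+1 ∉ : so j = a, x = a, A(x) = 0
        rcases eq_or_lt_of_le (le_of_abs_le hj) with hja | hja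
        · have : x = ((a : ℤ) : ZMod N) := by rw [← hjx, hja]
          rw [this, hAa]; simp
        · exact absurd ⟨j + 1, by rw [abs_le] at hj ⊢; omega,
            by push_cast; rw [hjx]⟩ hm
    have h3' : (acoef N a (x - 1) : ℂ) * f (x - 1) = 0 := by
      by_cases hm : x - 1 ∈ dInterval N a
      · rw [hf _ hm, mul_zero]
      · rcases eq_or_lt_of_le (neg_le_of_abs_le hj) with hja | hja
        · have : x - 1 = ((-a - 1 : ℤ) : ZMod N) := by
            rw [← hjx, ← hja]; push_cast; ring
          rw [this, hAb]; simp
        · exact absurd ⟨j - 1, by rw [abs_le] at hj ⊢; omega,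
            by push_cast; rw [hjx]⟩ hm
    simp [Jop, h1', h2, h3']
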